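/- The cyclic derivative with respect to x of the free necklace polynomial N_{j+1,k} equals the sum of all monomials in the free algebra C<x,y> with exactly j occurrences of x and k occurrences of y. Similarly, the cyclic derivative with respect to y of N_{j,k+1} equals the same sum. -/

import Mathlib

/-!
Cyclic derivatives do not see rotations, so `δ_b N_{j,k}` is `1/n` times the sum of
`δ_b w` over all words `w` of the given content (`n = j + k`), not only over orbit
representatives. Writing `δ_b w` as the sum of `∂_b` (`leftDeriv b`) over the `n` rotations
of `w`, and using that each rotation permutes these words, this sum is `n` times the sum of
`∂_b w`; the factor `1/n` cancels. Finally, deleting the leading letter `b` is a bijection from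
the words of content `(j + 1, k)` (resp. `(j, k + 1)`) that start with `b` onto those of
content `(j, k)`.
-/

noncomputable section

/-- Rotation of a necklace by `c`. -/
def rotBy {n : ℕ} (c : Fin n) (f : Fin n → Bool) : Fin n → Bool := fun i => f (i + c)

/-- Two necklaces are related iff one is a rotation of the other. -/
def rotRel (n : ℕ) (f g : Fin n → Bool) : Prop := ∃ c : Fin n, g = rotBy c f

/-- Necklaces with `n` beads, `j` of them shaded (reading `x`). -/
def Neck (n j : ℕ) : Finset (Fin n → Bool) :=
  Finset.univ.filter fun f => (Finset.univ.filter fun i => f i = true).card = j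

/-- A choice of representative of the rotation orbit of `f`; it is constant on orbits. -/
def neckRep {n : ℕ} (f : Fin n → Bool) : Fin n → Bool :=
  (Quot.mk (rotRel n) f).out

/-- The word (`true = x`, `false = y`) read off a necklace. -/
def wordOf {n : ℕ} (f : Fin n → Bool) : FreeMonoid Bool := FreeMonoid.ofList (List.ofFn f)

/-- The free necklace polynomial `N_{j,k}`. -/
def NeckPoly (j k : ℕ) : MonoidAlgebra ℂ (FreeMonoid Bool) :=
  (((j + k : ℕ) : ℂ))⁻¹ •
    ∑ f ∈ Neck (j + k) j, MonoidAlgebra.single (wordOf (neckRep f)) 1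

/-- `M_{j,k}`: the sum of all monomials with `j` occurrences of `x` and `k` of `y`. -/
def Mono (j k : ℕ) : MonoidAlgebra ℂ (FreeMonoid Bool) :=
  ∑ f ∈ Neck (j + k) j, MonoidAlgebra.single (wordOf f) 1

/-- The cyclic derivative `δ_b` of a single word: sum, over all cyclic rotations of the
word beginning with the letter `b`, of the rotated word with that leading `b` deleted. -/
def cycDerivWord (b : Bool) (w : List Bool) : MonoidAlgebra ℂ (FreeMonoid Bool) :=
  ∑ l ∈ Finset.range w.length,
    if (w.rotate l).head? = some b then
      MonoidAlgebra.single (FreeMonoid.ofList (w.rotate l).tail) 1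
    else 0

/-- The cyclic derivative `δ_b`, extended linearly. -/
def cycDeriv (b : Bool) (p : MonoidAlgebra ℂ (FreeMonoid Bool)) :
    MonoidAlgebra ℂ (FreeMonoid Bool) :=
  p.coeff.sum fun w c => c • cycDerivWord b (FreeMonoid.toList w)

def leftDeriv (b : Bool) : List Bool → MonoidAlgebra ℂ (FreeMonoid Bool)
  | [] => 0
  | a :: w => if a = b then MonoidAlgebra.single (FreeMonoid.ofList w) 1 else 0

lemma cycDerivWord_eq_sum_leftDeriv (b : Bool) (w : List Bool) :
    cycDerivWord b w = ∑ l ∈ Finset.range w.length, leftDeriv b (w.rotate l) := by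
  refine Finset.sum_congr rfl fun l _ => ?_
  cases w.rotate l with
  | nil => rfl
  | cons a t => simp [leftDeriv]

def cycDerivLinear (b : Bool) :
    MonoidAlgebra ℂ (FreeMonoid Bool) →ₗ[ℂ] MonoidAlgebra ℂ (FreeMonoid Bool) :=
  Finsupp.linearCombination ℂ (fun w => cycDerivWord b (FreeMonoid.toList w)) ∘ₗ
    (MonoidAlgebra.coeffLinearEquiv ℂ).toLinearMap

lemma coe_cycDerivLinear (b : Bool) : ⇑(cycDerivLinear b) = cycDeriv b := rfl

lemma cycDeriv_single_one (b : Bool) (w : FreeMonoid Bool) :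
    cycDeriv b (MonoidAlgebra.single w 1) = cycDerivWord b (FreeMonoid.toList w) := by
  simp [← coe_cycDerivLinear, cycDerivLinear, MonoidAlgebra.coeffLinearEquiv]

section Necklace

variable {n : ℕ}

lemma rotBy_rotBy (c d : Fin n) (f : Fin n → Bool) : rotBy c (rotBy d f) = rotBy (c + d) f := by
  funext i; simp [rotBy, add_assoc]

lemma rotBy_zero [NeZero n] (f : Fin n → Bool) : rotBy 0 f = f := by
  funext i; simp [rotBy]

lemma rotBy_neg_rotBy [NeZero n] (c : Fin n) (f : Fin n → Bool) : rotBy (-c) (rotBy c f) = f := by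
  rw [rotBy_rotBy, neg_add_cancel, rotBy_zero]

lemma ofFn_rotBy (c : Fin n) (f : Fin n → Bool) :
    List.ofFn (rotBy c f) = (List.ofFn f).rotate c := by
  refine List.ext_get (by simp) fun i _ _ => ?_
  simp only [List.get_ofFn, List.get_rotate, rotBy]
  congr 1
  ext
  simp [Fin.add_def]

lemma rotRel_equivalence [NeZero n] : Equivalence (rotRel n) where
  refl f := ⟨0, (rotBy_zero f).symm⟩
  symm := by
    rintro f g ⟨c, rfl⟩
    exact ⟨-c, (rotBy_neg_rotBy c f).symm⟩
  trans := by
    rintro f g h ⟨c, rfl⟩ ⟨d, rfl⟩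
    exact ⟨d + c, rotBy_rotBy d c f⟩

lemma exists_neckRep_eq_rotBy [NeZero n] (f : Fin n → Bool) : ∃ c, neckRep f = rotBy c f := by
  obtain ⟨c, hc⟩ : rotRel n f (neckRep f) :=
    rotRel_equivalence.eqvGen_iff.mp (Quot.eq.mp (Quot.out_eq (Quot.mk (rotRel n) f))).symm
  exact ⟨c, hc⟩

lemma rotBy_mem_Neck_iff [NeZero n] {m : ℕ} (c : Fin n) (f : Fin n → Bool) :
    rotBy c f ∈ Neck n m ↔ f ∈ Neck n m := by
  simp only [Neck, Finset.mem_filter, Finset.mem_univ, true_and, Finset.card_filter]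
  rw [Fintype.sum_equiv (Equiv.addRight c) (fun i => if rotBy c f i = true then 1 else 0)
    (fun i => if f i = true then 1 else 0) fun _ => rfl]

lemma sum_Neck_rotBy [NeZero n] {M : Type*} [AddCommMonoid M] (m : ℕ) (c : Fin n)
    (φ : (Fin n → Bool) → M) : ∑ f ∈ Neck n m, φ (rotBy c f) = ∑ f ∈ Neck n m, φ f :=
  Finset.sum_nbij' (rotBy c) (rotBy (-c)) (fun f hf => (rotBy_mem_Neck_iff c f).mpr hf)
    (fun f hf => (rotBy_mem_Neck_iff (-c) f).mpr hf) (fun f _ => rotBy_neg_rotBy c f)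
    (fun f _ => by simpa using rotBy_neg_rotBy (-c) f) fun _ _ => rfl

lemma cycDerivWord_ofFn (b : Bool) (f : Fin n → Bool) :
    cycDerivWord b (List.ofFn f) = ∑ c : Fin n, leftDeriv b (List.ofFn (rotBy c f)) := by
  rw [cycDerivWord_eq_sum_leftDeriv, List.length_ofFn, ← Fin.sum_univ_eq_sum_range]
  simp [ofFn_rotBy]

lemma cycDerivWord_ofFn_rotBy [NeZero n] (b : Bool) (d : Fin n) (f : Fin n → Bool) :
    cycDerivWord b (List.ofFn (rotBy d f)) = cycDerivWord b (List.ofFn f) := by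
  simp only [cycDerivWord_ofFn, rotBy_rotBy]
  exact Fintype.sum_equiv (Equiv.addRight d) _ _ fun _ => rfl

lemma sum_Neck_cycDerivWord [NeZero n] (b : Bool) (m : ℕ) :
    ∑ f ∈ Neck n m, cycDerivWord b (List.ofFn f) =
      n • ∑ g ∈ Neck n m, leftDeriv b (List.ofFn g) := by
  simp only [cycDerivWord_ofFn]
  rw [Finset.sum_comm]
  simp only [sum_Neck_rotBy m _ fun g => leftDeriv b (List.ofFn g)]
  rw [Finset.sum_const, Finset.card_univ, Fintype.card_fin]

end Necklace

lemma cycDeriv_NeckPoly (b : Bool) (j k : ℕ) [NeZero (j + k)] :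
    cycDeriv b (NeckPoly j k) = ∑ g ∈ Neck (j + k) j, leftDeriv b (List.ofFn g) := by
  have hrep (f : Fin (j + k) → Bool) :
      cycDerivWord b (FreeMonoid.toList (wordOf (neckRep f))) = cycDerivWord b (List.ofFn f) := by
    obtain ⟨c, hc⟩ := exists_neckRep_eq_rotBy f
    rw [wordOf, FreeMonoid.toList_ofList, hc, cycDerivWord_ofFn_rotBy]
  rw [NeckPoly, ← coe_cycDerivLinear, map_smul, map_sum]
  simp only [coe_cycDerivLinear, cycDeriv_single_one, hrep]
  rw [sum_Neck_cycDerivWord, ← Nat.cast_smul_eq_nsmul ℂ, smul_smul,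
    inv_mul_cancel₀ (Nat.cast_ne_zero.mpr (NeZero.ne _)), one_smul]

lemma card_filter_cons_eq_true {N : ℕ} (b : Bool) (g : Fin N → Bool) :
    (Finset.univ.filter fun i => (Fin.cons b g : Fin (N + 1) → Bool) i = true).card
      = (Finset.univ.filter fun i => g i = true).card + b.toNat := by
  rw [Finset.card_filter, Finset.card_filter, Fin.sum_univ_succ]
  cases b <;> simp [add_comm]

lemma cons_mem_Neck_iff {N m : ℕ} (b : Bool) (g : Fin N → Bool) :
    (Fin.cons b g : Fin (N + 1) → Bool) ∈ Neck (N + 1) (m + b.toNat) ↔ g ∈ Neck N m := by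
  simp [Neck, card_filter_cons_eq_true]

lemma leftDeriv_ofFn {N : ℕ} (b : Bool) (g : Fin (N + 1) → Bool) :
    leftDeriv b (List.ofFn g) =
      if g 0 = b then MonoidAlgebra.single (wordOf (Fin.tail g)) 1 else 0 := by
  rw [List.ofFn_succ]; rfl

lemma sum_Neck_leftDeriv (b : Bool) (j k : ℕ) :
    ∑ g ∈ Neck (j + k + 1) (j + b.toNat), leftDeriv b (List.ofFn g) = Mono j k := by
  simp only [leftDeriv_ofFn]
  rw [← Finset.sum_filter]
  refine Finset.sum_nbij' Fin.tail (Fin.cons (α := fun _ => Bool) b) ?_ ?_ ?_ ?_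
    fun _ _ => rfl
  · intro g hg
    obtain ⟨hg, rfl⟩ := Finset.mem_filter.mp hg
    rwa [← cons_mem_Neck_iff, Fin.cons_self_tail]
  · intro g hg
    exact Finset.mem_filter.mpr ⟨(cons_mem_Neck_iff b g).mpr hg, rfl⟩
  · intro g hg
    rw [← (Finset.mem_filter.mp hg).2, Fin.cons_self_tail]
  · intro g _
    exact Fin.tail_cons _ _

theorem stmt3 (j k : ℕ) :
    cycDeriv true (NeckPoly (j + 1) k) = Mono j k ∧
    cycDeriv false (NeckPoly j (k + 1)) = Mono j k := by
  have : NeZero (j + 1 + k) := ⟨by omega⟩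
  constructor
  · rw [cycDeriv_NeckPoly, Nat.add_right_comm]
    exact sum_Neck_leftDeriv true j k
  · rw [cycDeriv_NeckPoly, ← Nat.add_assoc]
    exact sum_Neck_leftDeriv false j k
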